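/- Let L₁ and L₂ be regular languages over Σ with L₁ ⊆ ⋃_{α ∈ Σ^κ} Σ*·α·Σ*·overline(α) and L₂ ⊆ ⋃_{α ∈ Σ^κ} α·Σ*·overline(α)·Σ*. Let λ = max(λ_{L₁}, λ_{L₂}) and let η = λ_{H_κ(L₁,L₂)}. Then √λ ≤ η ≤ λ. -/

import Mathlib

/-- The antimorphic extension of an involution on letters to words. -/
def ovr {σ : Type} (bar : σ → σ) (w : List σ) : List σ := (w.map bar).reverse

/-- The hairpin completion `H_κ(L₁, L₂)`. -/
def hairpinCompletion {σ : Type} (bar : σ → σ) (κ : ℕ) (L1 L2 : Language σ) :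
    Language σ :=
  { π | ∃ γ α β : List σ,
      π = γ ++ α ++ β ++ ovr bar α ++ ovr bar γ ∧
      κ ≤ α.length ∧
      (γ ++ α ++ β ++ ovr bar α ∈ L1 ∨ α ++ β ++ ovr bar α ++ ovr bar γ ∈ L2) }

/-- The canonical factorization `(γ, α, β)` of a word `π` of the hairpin completion. -/
def CanonFact {σ : Type} (bar : σ → σ) (κ : ℕ) (L1 L2 : Language σ)
    (π γ α β : List σ) : Prop :=
  π = γ ++ α ++ β ++ ovr bar α ++ ovr bar γ ∧
  α.length = κ ∧
  (γ ++ α ++ β ++ ovr bar α ∈ L1 ∨ α ++ β ++ ovr bar α ++ ovr bar γ ∈ L2) ∧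
  (∀ u : List σ, u <+: π → u ∈ L1 → u <+: γ ++ α ++ β ++ ovr bar α) ∧
  (∀ u : List σ, u <:+ π → u ∈ L2 → u <:+ α ++ β ++ ovr bar α ++ ovr bar γ)

/-- The language of minimal gamma-alpha-prefixes of words of the hairpin completion. -/
def MGP {σ : Type} (bar : σ → σ) (κ : ℕ) (L1 L2 : Language σ) : Language σ :=
  { p | ∃ π γ α β : List σ, π ∈ hairpinCompletion bar κ L1 L2 ∧
      CanonFact bar κ L1 L2 π γ α β ∧ p = γ ++ α }

/-- The language of middle factors of canonical factorizations of words
of the hairpin completion. -/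
def Mid {σ : Type} (bar : σ → σ) (κ : ℕ) (L1 L2 : Language σ) : Language σ :=
  { β | ∃ π γ α : List σ, π ∈ hairpinCompletion bar κ L1 L2 ∧
      CanonFact bar κ L1 L2 π γ α β }

/-- The growth indicator of a language: the infimum of all `λ ≥ 0` such that
`|L ∩ Σ^m| ≤ c·λ^m` for some constant `c > 0` and all `m`. -/
noncomputable def growthInd {σ : Type} (L : Language σ) : ℝ :=
  sInf { l : ℝ | 0 ≤ l ∧ ∃ c : ℝ, 0 < c ∧
    ∀ m : ℕ, (Set.ncard { w : List σ | w ∈ L ∧ w.length = m } : ℝ) ≤ c * l ^ m }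

/-!
A word of `H_κ(L₁, L₂)` of length `m` is `w · ovr γ` with `w ∈ L₁` or `γ · w` with `w ∈ L₂`,
where `γ` is read off from `w` and `m` (using that `¯` is an involution). Hence
`|H ∩ Σ^m| ≤ ∑_{n ≤ m} (|L₁ ∩ Σ^n| + |L₂ ∩ Σ^n|)`, and as a polynomial factor does not change
the growth indicator, `η ≤ λ`. Conversely, the shape of the words of `L₁` lets every `w ∈ L₁`
be completed to a hairpin word of length at most `2|w|` having `w` as a prefix (for `L₂`, as a
suffix), so `|Lᵢ ∩ Σ^n| ≤ ∑_{n ≤ m ≤ 2n} |H ∩ Σ^m|` and `λ ≤ η²`. Both estimates need the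
indicators to be at least `1`, which is the case for infinite languages; if `L₁` and `L₂` are
finite, so is `H`, and all three indicators vanish.
-/

open Filter Topology

section Growth

variable {σ : Type}

noncomputable def lengthCount (L : Language σ) (m : ℕ) : ℕ :=
  Set.ncard {w : List σ | w ∈ L ∧ w.length = m}

theorem finite_setOf_mem_and_length_eq [Finite σ] (L : Language σ) (m : ℕ) :
    {w : List σ | w ∈ L ∧ w.length = m}.Finite :=
  (List.finite_length_eq σ m).subset fun _ hw => hw.2

theorem finite_of_forall_exists_length_le [Finite σ] {s t : Set (List σ)}
    (ht : t.Finite) (h : ∀ w ∈ s, ∃ π ∈ t, w.length ≤ π.length) : s.Finite := by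
  obtain ⟨B, hB⟩ := (ht.image List.length).bddAbove
  refine (List.finite_length_le σ B).subset fun w hw => ?_
  obtain ⟨π, hπ, hle⟩ := h w hw
  exact hle.trans (hB ⟨π, hπ, rfl⟩)

theorem lengthCount_le_card_pow [Finite σ] (L : Language σ) (m : ℕ) :
    lengthCount L m ≤ Nat.card σ ^ m :=
  calc lengthCount L m ≤ {w : List σ | w.length = m}.ncard :=
        Set.ncard_le_ncard (fun _ hw => hw.2) (List.finite_length_eq σ m)
    _ = Nat.card (List.Vector σ m) := (Nat.card_coe_set_eq _).symm
    _ = Nat.card σ ^ m := by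
      rw [Nat.card_congr (Equiv.vectorEquivFin σ m), Nat.card_fun, Nat.card_fin]

theorem growthInd_nonneg (L : Language σ) : 0 ≤ growthInd L :=
  Real.sInf_nonneg fun _ hl => hl.1

theorem growthInd_le_of_lengthCount_le {L : Language σ} {c l : ℝ} (hl : 0 ≤ l) (hc : 0 < c)
    (h : ∀ m, (lengthCount L m : ℝ) ≤ c * l ^ m) : growthInd L ≤ l :=
  csInf_le ⟨0, fun _ hx => hx.1⟩ ⟨hl, c, hc, h⟩

theorem exists_lengthCount_le_of_growthInd_lt [Finite σ] {L : Language σ} {x : ℝ}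
    (h : growthInd L < x) : ∃ c > 0, ∀ m, (lengthCount L m : ℝ) ≤ c * x ^ m := by
  have hne : {l : ℝ | 0 ≤ l ∧ ∃ c : ℝ, 0 < c ∧
      ∀ m : ℕ, (lengthCount L m : ℝ) ≤ c * l ^ m}.Nonempty :=
    ⟨Nat.card σ, by positivity, 1, one_pos, fun m => by
      simpa using (Nat.cast_le (α := ℝ)).2 (lengthCount_le_card_pow L m)⟩
  obtain ⟨l, ⟨hl, c, hc, hb⟩, hlx⟩ := (csInf_lt_iff ⟨0, fun _ hx => hx.1⟩ hne).1 h
  exact ⟨c, hc, fun m => (hb m).trans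
    (mul_le_mul_of_nonneg_left (pow_le_pow_left₀ hl hlx.le m) hc.le)⟩

theorem growthInd_le_of_eventually_lengthCount_le {L : Language σ} {c l : ℝ} (hl : 0 < l)
    (h : ∀ᶠ m in atTop, (lengthCount L m : ℝ) ≤ c * l ^ m) : growthInd L ≤ l := by
  obtain ⟨N, hN⟩ := eventually_atTop.1 h
  set s := ∑ n ∈ Finset.range N, (lengthCount L n : ℝ) / l ^ n
  have hs : 0 ≤ s := by positivity
  refine growthInd_le_of_lengthCount_le (c := max c 1 + s) hl.le
    (by positivity) fun m => ?_
  rcases lt_or_ge m N with hm | hm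
  · have hle : (lengthCount L m : ℝ) / l ^ m ≤ max c 1 + s :=
      (Finset.single_le_sum (f := fun n => (lengthCount L n : ℝ) / l ^ n)
        (fun n _ => by positivity) (Finset.mem_range.2 hm)).trans
        (le_add_of_nonneg_left (zero_le_one.trans (le_max_right c 1)))
    exact (div_le_iff₀ (by positivity)).1 hle
  · exact (hN m hm).trans (mul_le_mul_of_nonneg_right
      ((le_max_left c 1).trans (le_add_of_nonneg_right hs)) (by positivity))

theorem growthInd_le_of_lengthCount_le_mul_pow {L : Language σ} {c l : ℝ} (hl : 0 ≤ l)
    (h : ∀ m : ℕ, (lengthCount L m : ℝ) ≤ c * (m + 1) * l ^ m) : growthInd L ≤ l := by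
  have hc : 0 ≤ c := by simpa using (Nat.cast_nonneg _).trans (h 0)
  refine le_of_forall_gt_imp_ge_of_dense fun x hlx => ?_
  have hx : 0 < x := hl.trans_lt hlx
  have hr : 0 ≤ l / x := div_nonneg hl hx.le
  have hr1 : l / x < 1 := (div_lt_one hx).2 hlx
  have hlim : Tendsto (fun m : ℕ => (m + 1) * (l / x) ^ m) atTop (𝓝 0) := by
    simpa [add_mul] using (tendsto_self_mul_const_pow_of_lt_one hr hr1).add
      (tendsto_pow_atTop_nhds_zero_of_lt_one hr hr1)
  refine growthInd_le_of_eventually_lengthCount_le (c := c) hx ?_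
  filter_upwards [hlim.eventually_lt_const zero_lt_one] with m hm
  calc (lengthCount L m : ℝ) ≤ c * ((m + 1) * (l / x) ^ m) * x ^ m :=
        (h m).trans_eq (by rw [div_pow]; field_simp)
    _ ≤ c * 1 * x ^ m := by gcongr
    _ = c * x ^ m := by rw [mul_one]

theorem growthInd_eq_zero_of_finite {L : Language σ} (h : (L : Set (List σ)).Finite) :
    growthInd L = 0 := by
  obtain ⟨B, hB⟩ := (h.image List.length).bddAbove
  refine le_antisymm (le_of_forall_gt_imp_ge_of_dense fun x hx => ?_) (growthInd_nonneg L)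
  refine growthInd_le_of_eventually_lengthCount_le (c := 0) hx ?_
  filter_upwards [eventually_gt_atTop B] with m hm
  have hempty : {w : List σ | w ∈ L ∧ w.length = m} = ∅ :=
    Set.eq_empty_of_forall_notMem fun w hw => (hB ⟨w, hw.1, hw.2⟩).not_gt hm
  simp [lengthCount, hempty]

theorem finite_of_growthInd_lt_one [Finite σ] {L : Language σ} (h : growthInd L < 1) :
    (L : Set (List σ)).Finite := by
  obtain ⟨x, hLx, hx1⟩ := exists_between h
  obtain ⟨c, -, hb⟩ := exists_lengthCount_le_of_growthInd_lt hLx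
  have hx : 0 ≤ x := (growthInd_nonneg L).trans hLx.le
  obtain ⟨N, hN⟩ := eventually_atTop.1 <|
    ((tendsto_pow_atTop_nhds_zero_of_lt_one hx hx1).const_mul c).eventually_lt_const
      (show c * 0 < 1 by simp)
  refine (List.finite_length_lt σ N).subset fun w hw =>
    show w.length < N from not_le.1 fun hwN => ?_
  have hpos : 0 < lengthCount L w.length :=
    (Set.ncard_pos (finite_setOf_mem_and_length_eq L _)).2 ⟨w, hw, rfl⟩
  have hlt : (lengthCount L w.length : ℝ) < 1 := (hb _).trans_lt (hN _ hwN)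
  exact hlt.not_ge (Nat.one_le_cast.2 hpos)

theorem one_le_growthInd_of_infinite [Finite σ] {L : Language σ}
    (h : (L : Set (List σ)).Infinite) : 1 ≤ growthInd L :=
  not_lt.1 fun h' => h (finite_of_growthInd_lt_one h')

end Growth

section Counting

variable {σ : Type} [Finite σ]

theorem lengthCount_le_sum_Icc {L H : Language σ} (P : List σ → List σ → Prop)
    (hP : ∀ {w w' π}, P w π → P w' π → w.length = w'.length → w = w')
    (hext : ∀ w ∈ L, ∃ π ∈ H, P w π ∧ w.length ≤ π.length ∧ π.length ≤ 2 * w.length)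
    (n : ℕ) : lengthCount L n ≤ ∑ m ∈ Finset.Icc n (2 * n), lengthCount H m := by
  choose! f hfH hfP hf using hext
  set A := {w : List σ | w ∈ L ∧ w.length = n}
  have hinj : Set.InjOn f A := fun w hw w' hw' hff' =>
    hP (hfP w hw.1) (hff' ▸ hfP w' hw'.1) (hw.2.trans hw'.2.symm)
  have hmaps : f '' A ⊆ ⋃ m ∈ Finset.Icc n (2 * n), {π | π ∈ H ∧ π.length = m} := by
    rintro _ ⟨w, ⟨hw, rfl⟩, rfl⟩
    simp only [Set.mem_iUnion, Finset.mem_Icc]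
    exact ⟨_, hf w hw, ⟨hfH w hw, rfl⟩⟩
  calc lengthCount L n = (f '' A).ncard := hinj.ncard_image.symm
    _ ≤ (⋃ m ∈ Finset.Icc n (2 * n), {π | π ∈ H ∧ π.length = m}).ncard :=
        Set.ncard_le_ncard hmaps ((Finset.Icc n (2 * n)).finite_toSet.biUnion
          fun m _ => finite_setOf_mem_and_length_eq H m)
    _ ≤ _ := Finset.set_ncard_biUnion_le _ _

theorem lengthCount_le_sum_range {L₁ L₂ H : Language σ} (f g : ℕ → List σ → List σ)
    (hcover : ∀ π ∈ H, ∃ w, w.length ≤ π.length ∧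
      (w ∈ L₁ ∧ π = f π.length w ∨ w ∈ L₂ ∧ π = g π.length w))
    (m : ℕ) :
    lengthCount H m ≤ ∑ n ∈ Finset.range (m + 1), (lengthCount L₁ n + lengthCount L₂ n) := by
  set A : Language σ → ℕ → Set (List σ) := fun L n => {w | w ∈ L ∧ w.length = n}
  have hsub : {π | π ∈ H ∧ π.length = m} ⊆
      ⋃ n ∈ Finset.range (m + 1), (f m '' A L₁ n ∪ g m '' A L₂ n) := by
    rintro π ⟨hπ, rfl⟩
    obtain ⟨w, hw, h₁ | h₂⟩ := hcover π hπ
    · exact Set.mem_biUnion (Finset.mem_range_succ_iff.2 hw)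
        (Or.inl ⟨w, ⟨h₁.1, rfl⟩, h₁.2.symm⟩)
    · exact Set.mem_biUnion (Finset.mem_range_succ_iff.2 hw)
        (Or.inr ⟨w, ⟨h₂.1, rfl⟩, h₂.2.symm⟩)
  calc lengthCount H m ≤ (⋃ n ∈ Finset.range (m + 1), (f m '' A L₁ n ∪ g m '' A L₂ n)).ncard :=
        Set.ncard_le_ncard hsub ((Finset.range (m + 1)).finite_toSet.biUnion fun n _ =>
          ((finite_setOf_mem_and_length_eq L₁ n).image _).union
            ((finite_setOf_mem_and_length_eq L₂ n).image _))
    _ ≤ ∑ n ∈ Finset.range (m + 1), (f m '' A L₁ n ∪ g m '' A L₂ n).ncard :=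
        Finset.set_ncard_biUnion_le _ _
    _ ≤ _ := Finset.sum_le_sum fun n _ => (Set.ncard_union_le _ _).trans
        (add_le_add (Set.ncard_image_le (finite_setOf_mem_and_length_eq L₁ n))
          (Set.ncard_image_le (finite_setOf_mem_and_length_eq L₂ n)))

theorem growthInd_le_max_of_lengthCount_le_sum {L₁ L₂ H : Language σ}
    (hH : ∀ m, lengthCount H m ≤
      ∑ n ∈ Finset.range (m + 1), (lengthCount L₁ n + lengthCount L₂ n))
    (h1 : 1 ≤ max (growthInd L₁) (growthInd L₂)) :
    growthInd H ≤ max (growthInd L₁) (growthInd L₂) := by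
  refine le_of_forall_gt_imp_ge_of_dense fun l hl => ?_
  obtain ⟨c₁, hc₁, hb₁⟩ := exists_lengthCount_le_of_growthInd_lt ((le_max_left _ _).trans_lt hl)
  obtain ⟨c₂, hc₂, hb₂⟩ := exists_lengthCount_le_of_growthInd_lt ((le_max_right _ _).trans_lt hl)
  have hl1 : 1 ≤ l := h1.trans hl.le
  refine growthInd_le_of_lengthCount_le_mul_pow (c := c₁ + c₂) (by linarith) fun m => ?_
  calc (lengthCount H m : ℝ)
      ≤ ∑ n ∈ Finset.range (m + 1), ((lengthCount L₁ n : ℝ) + lengthCount L₂ n) := by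
        exact_mod_cast hH m
    _ ≤ ∑ n ∈ Finset.range (m + 1), (c₁ + c₂) * l ^ m := Finset.sum_le_sum fun n hn => by
        have : l ^ n ≤ l ^ m := pow_le_pow_right₀ hl1 (Finset.mem_range_succ_iff.1 hn)
        calc (lengthCount L₁ n : ℝ) + lengthCount L₂ n ≤ c₁ * l ^ n + c₂ * l ^ n :=
              add_le_add (hb₁ n) (hb₂ n)
          _ ≤ (c₁ + c₂) * l ^ m := by rw [← add_mul]; gcongr
    _ = (c₁ + c₂) * (m + 1) * l ^ m := by
        rw [Finset.sum_const, Finset.card_range, nsmul_eq_mul]; push_cast; ring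

theorem growthInd_le_sq_of_lengthCount_le_sum {L H : Language σ}
    (hL : ∀ n, lengthCount L n ≤ ∑ m ∈ Finset.Icc n (2 * n), lengthCount H m)
    (h1 : 1 ≤ growthInd H) : growthInd L ≤ growthInd H ^ 2 := by
  refine le_of_forall_gt_imp_ge_of_dense fun y hy => ?_
  have hy0 : 0 ≤ y := by nlinarith
  obtain ⟨c, hc, hb⟩ := exists_lengthCount_le_of_growthInd_lt
    ((Real.lt_sqrt (growthInd_nonneg H)).2 hy)
  have hs1 : 1 ≤ √y := h1.trans ((Real.lt_sqrt (growthInd_nonneg H)).2 hy).le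
  rw [← Real.sq_sqrt hy0]
  refine growthInd_le_of_lengthCount_le_mul_pow (c := c) (by positivity) fun n => ?_
  calc (lengthCount L n : ℝ) ≤ ∑ m ∈ Finset.Icc n (2 * n), (lengthCount H m : ℝ) := by
        exact_mod_cast hL n
    _ ≤ ∑ m ∈ Finset.Icc n (2 * n), c * (√y ^ 2) ^ n := Finset.sum_le_sum fun m hm => by
        rw [← pow_mul]
        have : √y ^ m ≤ √y ^ (2 * n) := pow_le_pow_right₀ hs1 (Finset.mem_Icc.1 hm).2
        exact (hb m).trans (mul_le_mul_of_nonneg_left this hc.le)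
    _ = c * (n + 1) * (√y ^ 2) ^ n := by
        rw [Finset.sum_const, Nat.card_Icc, show 2 * n + 1 - n = n + 1 by omega, nsmul_eq_mul]
        push_cast; ring

end Counting

section Hairpin

variable {σ : Type} {bar : σ → σ} {κ : ℕ} {L₁ L₂ : Language σ}

@[simp]
theorem length_ovr (bar : σ → σ) (w : List σ) : (ovr bar w).length = w.length := by
  simp [ovr]

theorem ovr_ovr (hbar : ∀ a, bar (bar a) = a) (w : List σ) : ovr bar (ovr bar w) = w := by
  simp [ovr, List.map_reverse, Function.comp_def, hbar]

theorem exists_prefix_mem_hairpinCompletion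
    (hL₁ : ∀ w ∈ L₁, ∃ u α v : List σ, α.length = κ ∧ w = u ++ α ++ v ++ ovr bar α)
    {w : List σ} (hw : w ∈ L₁) :
    ∃ π ∈ hairpinCompletion bar κ L₁ L₂,
      w <+: π ∧ w.length ≤ π.length ∧ π.length ≤ 2 * w.length := by
  obtain ⟨γ, α, β, hα, rfl⟩ := hL₁ w hw
  refine ⟨_, ⟨γ, α, β, rfl, hα.ge, Or.inl hw⟩, List.prefix_append _ _, by simp, ?_⟩
  simp only [List.length_append, length_ovr]
  omega

theorem exists_suffix_mem_hairpinCompletion (hbar : ∀ a, bar (bar a) = a)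
    (hL₂ : ∀ w ∈ L₂, ∃ α u v : List σ, α.length = κ ∧ w = α ++ u ++ ovr bar α ++ v)
    {w : List σ} (hw : w ∈ L₂) :
    ∃ π ∈ hairpinCompletion bar κ L₁ L₂,
      w <:+ π ∧ w.length ≤ π.length ∧ π.length ≤ 2 * w.length := by
  obtain ⟨α, β, γ, hα, rfl⟩ := hL₂ w hw
  refine ⟨ovr bar γ ++ (α ++ β ++ ovr bar α ++ γ),
    ⟨ovr bar γ, α, β, by simp [ovr_ovr hbar], hα.ge, Or.inr (by rwa [ovr_ovr hbar])⟩,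
    List.suffix_append _ _, by simp, ?_⟩
  simp only [List.length_append, length_ovr]
  omega

theorem exists_eq_of_mem_hairpinCompletion (hbar : ∀ a, bar (bar a) = a) {π : List σ}
    (hπ : π ∈ hairpinCompletion bar κ L₁ L₂) :
    ∃ w, w.length ≤ π.length ∧ π.length ≤ 2 * w.length ∧
      (w ∈ L₁ ∧ π = w ++ ovr bar (w.take (π.length - w.length)) ∨
        w ∈ L₂ ∧ π = ovr bar (w.drop (2 * w.length - π.length)) ++ w) := by
  obtain ⟨γ, α, β, rfl, -, h₁ | h₂⟩ := hπ
  · refine ⟨_, by simp, by simp only [List.length_append, length_ovr]; omega, Or.inl ⟨h₁, ?_⟩⟩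
    have hγ : (γ ++ α ++ β ++ ovr bar α ++ ovr bar γ).length -
        (γ ++ α ++ β ++ ovr bar α).length = γ.length := by
      simp only [List.length_append, length_ovr]; omega
    rw [hγ]
    simp
  · refine ⟨_, by simp, by simp only [List.length_append, length_ovr]; omega, Or.inr ⟨h₂, ?_⟩⟩
    have hγ : 2 * (α ++ β ++ ovr bar α ++ ovr bar γ).length -
        (γ ++ α ++ β ++ ovr bar α ++ ovr bar γ).length = (α ++ β ++ ovr bar α).length := by
      simp only [List.length_append, length_ovr]; omega
    rw [hγ, List.drop_left, ovr_ovr hbar]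
    simp

theorem lengthCount_hairpinCompletion_le_sum [Finite σ] (hbar : ∀ a, bar (bar a) = a)
    (m : ℕ) :
    lengthCount (hairpinCompletion bar κ L₁ L₂) m ≤
      ∑ n ∈ Finset.range (m + 1), (lengthCount L₁ n + lengthCount L₂ n) :=
  lengthCount_le_sum_range (fun m w => w ++ ovr bar (w.take (m - w.length)))
    (fun m w => ovr bar (w.drop (2 * w.length - m)) ++ w)
    (fun _ hπ => (exists_eq_of_mem_hairpinCompletion hbar hπ).imp fun _ hw => ⟨hw.1, hw.2.2⟩) m

theorem lengthCount_left_le_sum_hairpinCompletion [Finite σ]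
    (hL₁ : ∀ w ∈ L₁, ∃ u α v : List σ, α.length = κ ∧ w = u ++ α ++ v ++ ovr bar α)
    (n : ℕ) :
    lengthCount L₁ n ≤ ∑ m ∈ Finset.Icc n (2 * n), lengthCount (hairpinCompletion bar κ L₁ L₂) m :=
  lengthCount_le_sum_Icc (· <+: ·)
    (fun h h' hl => (List.prefix_of_prefix_length_le h h' hl.le).eq_of_length hl)
    (fun _ hw => exists_prefix_mem_hairpinCompletion hL₁ hw) n

theorem lengthCount_right_le_sum_hairpinCompletion [Finite σ] (hbar : ∀ a, bar (bar a) = a)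
    (hL₂ : ∀ w ∈ L₂, ∃ α u v : List σ, α.length = κ ∧ w = α ++ u ++ ovr bar α ++ v)
    (n : ℕ) :
    lengthCount L₂ n ≤ ∑ m ∈ Finset.Icc n (2 * n), lengthCount (hairpinCompletion bar κ L₁ L₂) m :=
  lengthCount_le_sum_Icc (· <:+ ·)
    (fun h h' hl => (List.suffix_of_suffix_length_le h h' hl.le).eq_of_length hl)
    (fun _ hw => exists_suffix_mem_hairpinCompletion hbar hL₂ hw) n

theorem finite_hairpinCompletion [Finite σ] (h₁ : (L₁ : Set (List σ)).Finite)
    (h₂ : (L₂ : Set (List σ)).Finite) :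
    (hairpinCompletion bar κ L₁ L₂ : Set (List σ)).Finite := by
  obtain ⟨B, hB⟩ := ((h₁.union h₂).image List.length).bddAbove
  refine (List.finite_length_le σ (2 * B)).subset ?_
  rintro _ ⟨γ, α, β, rfl, -, h | h⟩
  · have := hB ⟨_, Or.inl h, rfl⟩
    simp only [Set.mem_ofPred_eq, List.length_append, length_ovr] at this ⊢
    omega
  · have := hB ⟨_, Or.inr h, rfl⟩
    simp only [Set.mem_ofPred_eq, List.length_append, length_ovr] at this ⊢
    omega

theorem finite_of_finite_hairpinCompletion [Finite σ] (hbar : ∀ a, bar (bar a) = a)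
    (hL₁ : ∀ w ∈ L₁, ∃ u α v : List σ, α.length = κ ∧ w = u ++ α ++ v ++ ovr bar α)
    (hL₂ : ∀ w ∈ L₂, ∃ α u v : List σ, α.length = κ ∧ w = α ++ u ++ ovr bar α ++ v)
    (hH : (hairpinCompletion bar κ L₁ L₂ : Set (List σ)).Finite) :
    (L₁ : Set (List σ)).Finite ∧ (L₂ : Set (List σ)).Finite :=
  ⟨finite_of_forall_exists_length_le hH fun _ hw =>
      let ⟨π, hπ, _, hle, _⟩ := exists_prefix_mem_hairpinCompletion hL₁ hw; ⟨π, hπ, hle⟩,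
    finite_of_forall_exists_length_le hH fun _ hw =>
      let ⟨π, hπ, _, hle, _⟩ := exists_suffix_mem_hairpinCompletion hbar hL₂ hw; ⟨π, hπ, hle⟩⟩

end Hairpin

theorem growth_of_hairpin_completion_bounds_general
    {σ : Type} [Fintype σ]
    (bar : σ → σ) (hbar : ∀ a, bar (bar a) = a)
    (κ : ℕ)
    (L1 L2 : Language σ)
    (hL1 : ∀ w ∈ L1, ∃ u α v : List σ,
      α.length = κ ∧ w = u ++ α ++ v ++ ovr bar α)
    (hL2 : ∀ w ∈ L2, ∃ α u v : List σ,
      α.length = κ ∧ w = α ++ u ++ ovr bar α ++ v) :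
    Real.sqrt (max (growthInd L1) (growthInd L2)) ≤
        growthInd (hairpinCompletion bar κ L1 L2) ∧
      growthInd (hairpinCompletion bar κ L1 L2) ≤
        max (growthInd L1) (growthInd L2) := by
  set H := hairpinCompletion bar κ L1 L2
  by_cases hfin : (L1 : Set (List σ)).Finite ∧ (L2 : Set (List σ)).Finite
  · have hH : (H : Set (List σ)).Finite := finite_hairpinCompletion hfin.1 hfin.2
    simp [growthInd_eq_zero_of_finite, hfin.1, hfin.2, hH]
  have hH : (H : Set (List σ)).Infinite :=
    mt (finite_of_finite_hairpinCompletion hbar hL1 hL2) hfin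
  have hη : 1 ≤ growthInd H := one_le_growthInd_of_infinite hH
  have hmax : 1 ≤ max (growthInd L1) (growthInd L2) := by
    rcases not_and_or.1 hfin with h | h
    · exact le_max_of_le_left (one_le_growthInd_of_infinite h)
    · exact le_max_of_le_right (one_le_growthInd_of_infinite h)
  exact ⟨(Real.sqrt_le_left (by linarith)).2 (max_le
      (growthInd_le_sq_of_lengthCount_le_sum (lengthCount_left_le_sum_hairpinCompletion hL1) hη)
      (growthInd_le_sq_of_lengthCount_le_sum
        (lengthCount_right_le_sum_hairpinCompletion hbar hL2) hη)),
    growthInd_le_max_of_lengthCount_le_sum (lengthCount_hairpinCompletion_le_sum hbar) hmax⟩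

theorem growth_of_hairpin_completion_bounds
    {σ : Type} [Fintype σ] (hσ : 2 ≤ Fintype.card σ)
    (bar : σ → σ) (hbar : ∀ a, bar (bar a) = a)
    (κ : ℕ) (hκ : 1 ≤ κ)
    (L1 L2 : Language σ) (h1 : L1.IsRegular) (h2 : L2.IsRegular)
    (hL1 : ∀ w ∈ L1, ∃ u α v : List σ,
      α.length = κ ∧ w = u ++ α ++ v ++ ovr bar α)
    (hL2 : ∀ w ∈ L2, ∃ α u v : List σ,
      α.length = κ ∧ w = α ++ u ++ ovr bar α ++ v) :
    Real.sqrt (max (growthInd L1) (growthInd L2)) ≤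
        growthInd (hairpinCompletion bar κ L1 L2) ∧
      growthInd (hairpinCompletion bar κ L1 L2) ≤
        max (growthInd L1) (growthInd L2) :=
  growth_of_hairpin_completion_bounds_general bar hbar κ L1 L2 hL1 hL2
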